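/- arXiv:1410.2935 — 2 statements merged into one kernel-verified Lean document; each statement's English description precedes it below -/
import Mathlib

section
/- Let w=i_n⋯i_1 be a reverse lattice word and σ=std(w). Then the column reading word of the standard reverse tableau T_w equals σ^{-1}, written in one-line notation. -/
open scoped BigOperators

namespace CompJdt

/-! ### Compositions, partitions, diagrams -/

/-- A (strong) composition: a list of positive integers. -/
def IsComposition (α : List ℕ) : Prop := ∀ x ∈ α, 0 < x

/-- A partition, recorded bottom row first (French convention):
weakly decreasing list of positive integers. -/
def IsPartition (lam : List ℕ) : Prop := (∀ x ∈ lam, 0 < x) ∧ lam.Pairwise (· ≥ ·)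

/-- Box `(r, c)` (1-based row and column) belongs to the diagram of `α`
(row `r` has `α r` boxes). For reverse composition diagrams rows are counted
from the top; for partition diagrams (French convention) from the bottom. -/
abbrev InD (α : List ℕ) (r c : ℕ) : Prop := 1 ≤ r ∧ 1 ≤ c ∧ c ≤ α.getD (r - 1) 0

/-- Box `(r,c)` lies in the inner shape `β` of the skew reverse composition shape
`δ // β` (`β` drawn in the bottom-left corner of `δ`). -/
abbrev InInnerC (δ β : List ℕ) (r c : ℕ) : Prop :=
  δ.length - β.length < r ∧ 1 ≤ c ∧ c ≤ β.getD (r - (δ.length - β.length) - 1) 0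

/-- Box of the skew reverse composition shape `δ // β`. -/
abbrev InSkewC (δ β : List ℕ) (r c : ℕ) : Prop := InD δ r c ∧ ¬ InInnerC δ β r c

/-- Box of the skew partition shape `lam / mu` (French convention). -/
abbrev InSkewP (lam mu : List ℕ) (r c : ℕ) : Prop := InD lam r c ∧ ¬ InD mu r c

/-- There is an addable node in column `c` of the partition obtained by sorting `l`. -/
abbrev HasAddable (l : List ℕ) (c : ℕ) : Prop := c = 1 ∨ (c - 1) ∈ l

/-! ### Tableaux as fillings (zero outside the shape) -/

/-- Semistandard reverse composition tableau of skew shape `δ // β`: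
rows weakly decrease left to right, first-column entries strictly increase
top to bottom, triple rule. -/
def IsSSRCTSkew (δ β : List ℕ) (τ : ℕ → ℕ → ℕ) : Prop :=
  (∀ r c, ¬ InSkewC δ β r c → τ r c = 0) ∧
  (∀ r c, InSkewC δ β r c → 0 < τ r c) ∧
  (∀ r c, 1 ≤ c → InSkewC δ β r c → InSkewC δ β r (c+1) → τ r (c+1) ≤ τ r c) ∧
  (∀ r r', InSkewC δ β r 1 → InSkewC δ β r' 1 → r < r' → τ r 1 < τ r' 1) ∧
  (∀ i j k, 1 ≤ k → i < j → InSkewC δ β j (k+1) →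
     (InInnerC δ β i k ∨ (InSkewC δ β i k ∧ τ j (k+1) ≤ τ i k)) →
     (InInnerC δ β i (k+1) ∨ (InSkewC δ β i (k+1) ∧ τ j (k+1) < τ i (k+1))))

def IsSSRCT (α : List ℕ) (τ : ℕ → ℕ → ℕ) : Prop := IsSSRCTSkew α [] τ

/-- Standard reverse composition tableau of skew shape: a semistandard one whose
entries are a bijection onto `{1, …, |δ| - |β|}`. -/
def IsSRCTSkew (δ β : List ℕ) (τ : ℕ → ℕ → ℕ) : Prop :=
  IsSSRCTSkew δ β τ ∧
  (∀ r c, InSkewC δ β r c → τ r c ≤ δ.sum - β.sum) ∧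
  (∀ r c r' c', InSkewC δ β r c → InSkewC δ β r' c' → τ r c = τ r' c' → (r, c) = (r', c')) ∧
  (∀ m, 1 ≤ m → m ≤ δ.sum - β.sum → ∃ r c, InSkewC δ β r c ∧ τ r c = m)

def IsSRCT (α : List ℕ) (τ : ℕ → ℕ → ℕ) : Prop := IsSRCTSkew α [] τ

/-- Semistandard reverse tableau of skew partition shape (French convention):
rows weakly decrease left to right, columns strictly decrease bottom to top. -/
def IsSSRTSkew (lam mu : List ℕ) (T : ℕ → ℕ → ℕ) : Prop :=
  (∀ r c, ¬ InSkewP lam mu r c → T r c = 0) ∧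
  (∀ r c, InSkewP lam mu r c → 0 < T r c) ∧
  (∀ r c, 1 ≤ c → InSkewP lam mu r c → InSkewP lam mu r (c+1) → T r (c+1) ≤ T r c) ∧
  (∀ r c, 1 ≤ r → InSkewP lam mu r c → InSkewP lam mu (r+1) c → T (r+1) c < T r c)

def IsSSRT (lam : List ℕ) (T : ℕ → ℕ → ℕ) : Prop := IsSSRTSkew lam [] T

def IsSRTSkew (lam mu : List ℕ) (T : ℕ → ℕ → ℕ) : Prop :=
  IsSSRTSkew lam mu T ∧
  (∀ r c, InSkewP lam mu r c → T r c ≤ lam.sum - mu.sum) ∧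
  (∀ r c r' c', InSkewP lam mu r c → InSkewP lam mu r' c' → T r c = T r' c' → (r, c) = (r', c')) ∧
  (∀ m, 1 ≤ m → m ≤ lam.sum - mu.sum → ∃ r c, InSkewP lam mu r c ∧ T r c = m)

def IsSRT (lam : List ℕ) (T : ℕ → ℕ → ℕ) : Prop := IsSRTSkew lam [] T

/-! ### Operators on compositions -/

/-- Box removing operator `d_i`: subtract 1 from the rightmost part equal to `i`
(omit it if it becomes 0); undefined (`none`) if there is no such part. -/
def boxRemove (i : ℕ) : List ℕ → Option (List ℕ)
  | [] => none
  | a :: s =>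
    match boxRemove i s with
    | some s' => some (a :: s')
    | none => if a = i then some (if i = 1 then s else (i - 1) :: s) else none

/-- `vSeq k = d_1 ∘ d_2 ∘ ⋯ ∘ d_k` (apply `d_k` first). -/
def vSeq : ℕ → List ℕ → Option (List ℕ)
  | 0, α => some α
  | k+1, α => (boxRemove (k+1) α).bind (vSeq k)

/-- Jeu de taquin operator `u_i = a_i ∘ d_1 ∘ d_2 ∘ ⋯ ∘ d_{i-1}`. -/
def uOp (i : ℕ) (α : List ℕ) : Option (List ℕ) := (vSeq (i - 1) α).map (· ++ [i])

/-- Apply `u_{i_1}, …, u_{i_n}` in order (`l = [i_1, …, i_n]`), each application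
required to be defined. -/
def uSeq (l : List ℕ) (α : List ℕ) : Option (List ℕ) :=
  l.foldl (fun o i => o.bind (uOp i)) (some α)

/-- Cover relation of the poset `R_c`. -/
def CoverR (γ δ : List ℕ) : Prop := ∃ i, 0 < i ∧ uOp i γ = some δ

/-- Cover relation `β ⋖_c α` of the reverse composition poset `L_c`. -/
def CoverC (β α : List ℕ) : Prop :=
  α = 1 :: β ∨ ∃ k, k < β.length ∧ α = β.set k (β.getD k 0 + 1) ∧
    ∀ i < k, β.getD i 0 ≠ β.getD k 0

/-! ### Noncommutative symmetric functions -/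

/-- The algebra `NSym` of noncommutative symmetric functions: the free associative
`ℚ`-algebra on generators `h_1, h_2, …` (generator `i` is `h_i`). -/
abbrev NSym := FreeAlgebra ℚ ℕ

/-- `h_α = h_{α_1} ⋯ h_{α_k}`. -/
def hFun (α : List ℕ) : NSym := (α.map (FreeAlgebra.ι ℚ)).prod

/-- `α ⪰ β`: `α` is obtained by adding together adjacent parts of `β` in order. -/
def Coarsens (α β : List ℕ) : Prop :=
  ∃ L : List (List ℕ), (∀ l ∈ L, l ≠ []) ∧ L.flatten = β ∧ L.map List.sum = α

/-- Noncommutative ribbon Schur function `R_β`. -/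
noncomputable def Ribbon (β : List ℕ) : NSym :=
  ∑ᶠ α ∈ {α : List ℕ | Coarsens α β}, ((-1 : ℚ) ^ (β.length - α.length)) • hFun α

/-- `m` is a descent of the SRCT `τ` (of shape `α`): `m+1` lies weakly right of `m`. -/
def IsDescent (α : List ℕ) (τ : ℕ → ℕ → ℕ) (m : ℕ) : Prop :=
  ∃ r c r' c', InD α r c ∧ InD α r' c' ∧ τ r c = m ∧ τ r' c' = m + 1 ∧ c ≤ c'

/-- The descent composition of `τ` is `β`, i.e. the descent set of `τ` equals
`set(β) = {β_1, β_1+β_2, …}`. -/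
def HasDescentComp (α β : List ℕ) (τ : ℕ → ℕ → ℕ) : Prop :=
  ∀ m, IsDescent α τ m ↔ ∃ k, 1 ≤ k ∧ k < β.length ∧ (β.take k).sum = m

/-- `d_{αβ}`: the number of SRCTs of shape `α` with descent composition `β`. -/
noncomputable def dCount (α β : List ℕ) : ℕ :=
  Nat.card {τ : ℕ → ℕ → ℕ // IsSRCT α τ ∧ HasDescentComp α β τ}

/-! ### words, standardization, variant Robinson–Schensted -/

/-- Reverse lattice word: in every suffix, `j+1` occurs at most as often as `j`. -/
def ReverseLattice (w : List ℕ) : Prop :=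
  (∀ x ∈ w, 0 < x) ∧ ∀ s ∈ w.tails, ∀ j : ℕ, s.count (j + 2) ≤ s.count (j + 1)

/-- Standardization of a word (read left to right), in one-line notation. -/
def stdList (w : List ℕ) : List ℕ :=
  (List.range w.length).map (fun p =>
    (w.filter (fun x => decide (x < w.getD p 0))).length +
    ((w.take (p + 1)).filter (fun x => decide (x = w.getD p 0))).length)

/-- Inverse of a permutation given in one-line notation. -/
def invList (σ : List ℕ) : List ℕ :=
  (List.range σ.length).map (fun k => σ.idxOf (k + 1) + 1)

/-- Row insertion for reverse tableaux: `y` replaces (and bumps) the greatest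
entry smaller than `y`, or is appended at the end of the row. -/
def insertRow (y : ℕ) : List ℕ → List ℕ × Option ℕ
  | [] => ([y], none)
  | a :: s =>
    if a < y then (y :: s, some a)
    else
      let p := insertRow y s
      (a :: p.1, p.2)

/-- Insert `y` into a reverse tableau (rows listed bottom to top); returns the new
tableau and the (1-based) index of the row where a new box was created. -/
def insertT (y : ℕ) : List (List ℕ) → List (List ℕ) × ℕ
  | [] => ([[y]], 1)
  | row :: rest =>
    match insertRow y row with
    | (row', none) => (row' :: rest, 1)
    | (row', some b) =>
      let p := insertT b rest
      (row' :: p.1, p.2 + 1)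

/-- Append the value `v` at the end of row `r` of a tableau. -/
def addEntryAt (r v : ℕ) (Q : List (List ℕ)) : List (List ℕ) :=
  if r ≤ Q.length then Q.set (r - 1) (Q.getD (r - 1) [] ++ [v]) else Q ++ [[v]]

/-- Variant Robinson–Schensted: insert the values in order; the `i`-th insertion
records `n - i + 1` in the recording tableau. -/
def RSaux : List ℕ → ℕ → List (List ℕ) × List (List ℕ) → List (List ℕ) × List (List ℕ)
  | [], _, pq => pq
  | y :: rest, v, (P, Q) =>
    let p := insertT y P
    RSaux rest (v - 1) (p.1, addEntryAt p.2 v Q)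

/-- Insertion tableau `P(σ)` of the variant Robinson–Schensted algorithm. -/
def PTab (σ : List ℕ) : List (List ℕ) := (RSaux σ σ.length ([], [])).1

/-- Recording tableau `Q(σ)` of the variant Robinson–Schensted algorithm. -/
def QTab (σ : List ℕ) : List (List ℕ) := (RSaux σ σ.length ([], [])).2

/-- Add a box (with value `v`) at the addable node in column `i` of a tableau
given by its rows (bottom to top). -/
def addBoxCol (i v : ℕ) : List (List ℕ) → List (List ℕ)
  | [] => [[v]]
  | row :: rest =>
    if row.length + 1 = i then (row ++ [v]) :: rest else row :: addBoxCol i v rest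

/-- The SRT `T_w` associated with a reverse lattice word `w = i_n ⋯ i_1` (read left
to right): the box added at step `k` (in column `i_k`) receives entry `n - k + 1`. -/
def TwTab (w : List ℕ) : List (List ℕ) :=
  (List.range w.length).foldl
    (fun t k => addBoxCol (w.reverse.getD k 0) (w.length - k) t) []

/-- Column `c` of a tableau given by its list of rows (bottom to top). -/
def colA (t : List (List ℕ)) (c : ℕ) : List ℕ := t.filterMap (fun row => row[c - 1]?)

/-- Column reading word: entries of each column in increasing order, columns left
to right. -/
def colWordL (t : List (List ℕ)) : List ℕ :=
  ((List.range ((t.map List.length).foldr max 0)).map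
    (fun c0 => (colA t (c0 + 1)).insertionSort (· ≤ ·))).flatten

/-- The filling function of a tableau given by its list of rows. -/
def tabFun (t : List (List ℕ)) (r c : ℕ) : ℕ := (t.getD (r - 1) []).getD (c - 1) 0

/-- The shape of a tableau given by its list of rows. -/
def tabShape (t : List (List ℕ)) : List ℕ := t.map List.length

/-- Column reading word of a filling with row lengths bounded by the shape `δ`:
positive entries of each column in increasing order, columns left to right. -/
def colWordF (δ : List ℕ) (τ : ℕ → ℕ → ℕ) : List ℕ :=
  ((List.range (δ.foldr max 0)).map (fun c0 =>
    (((List.range δ.length).map (fun r0 => τ (r0 + 1) (c0 + 1))).filter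
        (fun v => decide (0 < v))).insertionSort (· ≤ ·))).flatten

/-! ### Backward jeu de taquin slides on (skew) SSRT -/

/-- `(r, c)` is an addable node of the partition `mu`. -/
abbrev AddableAt (mu : List ℕ) (r c : ℕ) : Prop :=
  1 ≤ r ∧ c = mu.getD (r - 1) 0 + 1 ∧ (r = 1 ∨ c ≤ mu.getD (r - 2) 0)

/-- One step of a backward slide: the empty box at `c` is filled from the smaller
of the entries below and to the left (below on a tie). -/
def slideStepB (lam mu : List ℕ) (T : ℕ → ℕ → ℕ) (c : ℕ × ℕ) : ℕ × ℕ :=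
  if InSkewP lam mu (c.1 - 1) c.2 then
    if InSkewP lam mu c.1 (c.2 - 1) then
      if T (c.1 - 1) c.2 ≤ T c.1 (c.2 - 1) then (c.1 - 1, c.2) else (c.1, c.2 - 1)
    else (c.1 - 1, c.2)
  else (c.1, c.2 - 1)

/-- Backward slide loop; also records (in a list) the entries that move
horizontally.  Returns (new filling, final empty box, horizontal entries). -/
def bSlideAux (lam mu : List ℕ) :
    ℕ → (ℕ → ℕ → ℕ) → ℕ × ℕ → List ℕ → (ℕ → ℕ → ℕ) × (ℕ × ℕ) × List ℕ
  | 0, T, c, H => (T, c, H)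
  | fuel+1, T, c, H =>
    if AddableAt mu c.1 c.2 then ((fun r cc => if (r, cc) = c then 0 else T r cc), c, H)
    else
      let c' := slideStepB lam mu T c
      bSlideAux lam mu fuel
        (fun r cc => if (r, cc) = c then T c'.1 c'.2 else T r cc) c'
        (if c'.1 = c.1 then T c'.1 c'.2 :: H else H)

/-- Backward jeu de taquin slide `jdt_{j₀}` starting at the addable node of `lam`
in column `j₀`, for a filling of the skew shape `lam / mu`. Returns the new
filling, the box added to the inner shape, and the multiset (as a list) of
entries that moved horizontally. -/
def jdtB (lam mu : List ℕ) (j0 : ℕ) (T : ℕ → ℕ → ℕ) :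
    (ℕ → ℕ → ℕ) × (ℕ × ℕ) × List ℕ :=
  bSlideAux lam mu (lam.length + j0 + 2) T
    (lam.countP (fun p => decide (j0 ≤ p)) + 1, j0) []

/-- Add a box at the addable node of the partition `lam` in column `c`. -/
def addBoxP (lam : List ℕ) (c : ℕ) : List ℕ :=
  let r := lam.countP (fun p => decide (c ≤ p))
  if r < lam.length then lam.set r (lam.getD r 0 + 1) else lam ++ [1]

/-- Add a box to the partition `mu` at the end of row `r`. -/
def addBoxRow (mu : List ℕ) (r : ℕ) : List ℕ :=
  if r ≤ mu.length then mu.set (r - 1) (mu.getD (r - 1) 0 + 1) else mu ++ [1]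

/-- Iterate backward jdt slides `jdt_{j}` (columns taken from the list in order),
tracking outer shape, inner shape and filling. -/
def jdtIter : List ℕ → List ℕ × List ℕ × (ℕ → ℕ → ℕ) → List ℕ × List ℕ × (ℕ → ℕ → ℕ)
  | [], s => s
  | j :: rest, (lam, mu, T) =>
    let res := jdtB lam mu j T
    jdtIter rest (addBoxP lam j, addBoxRow mu res.2.1.1, res.1)

/-- Validity of a sequence of slide columns on a partition: at each step, the
current outer shape has an addable node in the required column. -/
def ValidSeqP : List ℕ → List ℕ → Prop
  | [], _ => True
  | j :: rest, lam => 0 < j ∧ HasAddable lam j ∧ ValidSeqP rest (addBoxP lam j)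

/-! ### `f`, `tjdt` -/

/-- The row of `f_{i+1}(T)`: the largest row `r` with `T r i < T (r-1) (i+1)`
(with the convention `T 0 s = ∞`, i.e. boxes absent above count as `∞`). -/
def fRow (lam : List ℕ) (T : ℕ → ℕ → ℕ) (i : ℕ) : ℕ :=
  ((List.range (lam.length + 1)).filter (fun r =>
    decide (InD lam r i ∧ (¬ InD lam (r - 1) (i + 1) ∨ T r i < T (r - 1) (i + 1))))).foldr
    max 0

/-- `tjdt_{i+1}(T)`: delete the entry `f_{i+1}(T)` from column `i` and slide every
entry of column `i` above it down one row. -/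
def tjdtFun (lam : List ℕ) (T : ℕ → ℕ → ℕ) (i : ℕ) : ℕ → ℕ → ℕ :=
  fun p q => if q = i ∧ fRow lam T i ≤ p then T (p + 1) q else T p q

/-- The shape of `tjdt_{i+1}(T)`: remove the topmost box of column `i`. -/
def tjdtShape (lam : List ℕ) (i : ℕ) : List ℕ :=
  let m := lam.countP (fun p => decide (i ≤ p))
  (lam.set (m - 1) (lam.getD (m - 1) 0 - 1)).filter (fun x => decide (x ≠ 0))

/-! ### `φ`, `Φ`, `μ` on SSRCT -/

/-- The index `r₁`: the bottommost (largest index) row of `α` of size `i`. -/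
def r1? (α : List ℕ) (i : ℕ) : Option ℕ :=
  let l := (List.range (α.length + 1)).filter (fun r => decide (1 ≤ r ∧ α.getD (r - 1) 0 = i))
  if l = [] then none else some (l.foldr max 0)

/-- Next index: the greatest `r < rp` with `τ r i > τ rp i ≥ τ r (i+1)`. -/
def nextR (τ : ℕ → ℕ → ℕ) (i rp : ℕ) : Option ℕ :=
  let l := (List.range rp).filter (fun r =>
    decide (1 ≤ r ∧ τ rp i < τ r i ∧ τ r (i + 1) ≤ τ rp i))
  if l = [] then none else some (l.foldr max 0)

def rChainAux (τ : ℕ → ℕ → ℕ) (i : ℕ) : ℕ → ℕ → List ℕ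
  | 0, r => [r]
  | fuel+1, r =>
    match nextR τ i r with
    | none => [r]
    | some r' => r :: rChainAux τ i fuel r'

/-- The list `[r₁, …, r_k]` used by `φ_{i+1}`. -/
def rChain (α : List ℕ) (τ : ℕ → ℕ → ℕ) (i : ℕ) : List ℕ :=
  match r1? α i with
  | none => []
  | some r1 => rChainAux τ i r1 r1

/-- The filling `φ_{i+1}(τ)`: entry of box `(r_j, i)` is replaced by that of box
`(r_{j-1}, i)` (so `τ (r_k) i` exits), and box `(r₁, i)` is removed. -/
def phiFun (α : List ℕ) (τ : ℕ → ℕ → ℕ) (i : ℕ) : ℕ → ℕ → ℕ :=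
  fun r c =>
    let rs := rChain α τ i
    if c = i ∧ r ∈ rs then
      (if rs.idxOf r = 0 then 0 else τ (rs.getD (rs.idxOf r - 1) 0) i)
    else τ r c

/-- The entry that exits the tableau when applying `φ_{i+1}`. -/
def exitEnt (α : List ℕ) (τ : ℕ → ℕ → ℕ) (i : ℕ) : ℕ :=
  match (rChain α τ i).getLast? with
  | some rk => τ rk i
  | none => 0

/-- `Φ_{m+1} = φ_2 ∘ φ_3 ∘ ⋯ ∘ φ_{m+1}` together with shape and the list of
exited entries: `PhiAux m (α, τ, [])` computes `Φ_{m+1}(τ)`. -/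
def PhiAux : ℕ → List ℕ × (ℕ → ℕ → ℕ) × List ℕ → List ℕ × (ℕ → ℕ → ℕ) × List ℕ
  | 0, s => s
  | m+1, (α, τ, H) =>
    PhiAux m ((boxRemove (m+1) α).getD α, phiFun α τ (m+1), exitEnt α τ (m+1) :: H)

/-- The largest entry of a filling of shape `α`. -/
def maxEnt (α : List ℕ) (τ : ℕ → ℕ → ℕ) : ℕ :=
  ((List.range α.length).map (fun r0 =>
    ((List.range (α.getD r0 0)).map (fun c0 => τ (r0 + 1) (c0 + 1))).foldr max 0)).foldr max 0

/-- Backward jeu de taquin slide `μ_i` on a straight-shape SSRCT `τ` of shape `α`: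
compute `Φ_i(τ)` (of shape `γ`), then add a bottom row of length `i` whose first
box is the inner box `(1)` and whose remaining boxes carry the exited entries in
decreasing order.  Returns the outer shape `(γ, i)` and the filling (zero on the
inner box). -/
def muFun (α : List ℕ) (τ : ℕ → ℕ → ℕ) (i : ℕ) : List ℕ × (ℕ → ℕ → ℕ) :=
  let res := PhiAux (i - 1) (α, τ, [])
  let γ := res.1
  let τ' := res.2.1
  let Hs := res.2.2.insertionSort (· ≥ ·)
  (γ ++ [i], fun r c =>
    if r = γ.length + 1 then (if 2 ≤ c ∧ c ≤ i then Hs.getD (c - 2) 0 else 0)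
    else τ' r c)

/-- `μ_i` with the convention that the vacated bottom-left corner is filled with a
new largest entry `max(τ) + 1`, so the result is again of straight shape. -/
def muFunMax (α : List ℕ) (τ : ℕ → ℕ → ℕ) (i : ℕ) : List ℕ × (ℕ → ℕ → ℕ) :=
  let res := PhiAux (i - 1) (α, τ, [])
  let γ := res.1
  let τ' := res.2.1
  let Hs := res.2.2.insertionSort (· ≥ ·)
  (γ ++ [i], fun r c =>
    if r = γ.length + 1 then
      (if c = 1 then maxEnt α τ + 1 else if 2 ≤ c ∧ c ≤ i then Hs.getD (c - 2) 0 else 0)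
    else τ' r c)

/-- Apply `μ_{i_1}, …, μ_{i_n}` (under the `max + 1` convention) to the empty SSRCT. -/
def muSeqMax (l : List ℕ) : List ℕ × (ℕ → ℕ → ℕ) :=
  l.foldl (fun p i => muFunMax p.1 p.2 i) ([], fun _ _ => 0)

/-- The canonical tableau `τ_α`: the `r`-th row from the top contains
`1 + Σ_{i<r} α_i, …, Σ_{i≤r} α_i` written right to left. -/
def canonTab (α : List ℕ) (r c : ℕ) : ℕ :=
  if InD α r c then (α.take r).sum + 1 - c else 0

/-- The inner shape of a skew filling: row lengths of the zero region inside `δ`. -/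
def innerOf (δ : List ℕ) (τ : ℕ → ℕ → ℕ) : List ℕ :=
  ((List.range δ.length).map (fun r0 =>
    ((List.range (δ.getD r0 0)).filter (fun c0 => decide (τ (r0 + 1) (c0 + 1) = 0))).length)).filter
    (fun x => decide (x ≠ 0))

/-- `μ_i` on a skew SSRCT (outer shape `δ`, inner boxes the zero region): complete
the inner shape with entries strictly larger than every entry, apply `μ_i`, and
retain only the original entries. -/
def muSkew (δ : List ℕ) (τ : ℕ → ℕ → ℕ) (i : ℕ) : List ℕ × (ℕ → ℕ → ℕ) :=
  let β := innerOf δ τ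
  let M := maxEnt δ τ
  let off := δ.length - β.length
  let full : ℕ → ℕ → ℕ := fun r c =>
    if InD δ r c ∧ τ r c = 0 then M + canonTab β (r - off) c else τ r c
  let res := muFun δ full i
  (res.1, fun r c => if M < res.2 r c then 0 else res.2 r c)

/-- Iterate `μ` slides on a (possibly skew) SSRCT. -/
def muIterSkew : List ℕ → List ℕ × (ℕ → ℕ → ℕ) → List ℕ × (ℕ → ℕ → ℕ)
  | [], p => p
  | j :: rest, (δ, τ) => muIterSkew rest (muSkew δ τ j)

/-- Validity of a sequence of `μ` slides on a composition: at each step the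
sorted outer shape has an addable node in the required column. -/
def ValidSeqU : List ℕ → List ℕ → Prop
  | [], _ => True
  | j :: rest, γ => 0 < j ∧ HasAddable γ j ∧ ValidSeqU rest ((uOp j γ).getD γ)

/-! ### Forward slides and evacuation -/

/-- One step of a forward slide: the empty box is filled from the larger of the
entries above and to the right (above on a tie). -/
def fStep (lam : List ℕ) (T : ℕ → ℕ → ℕ) (c : ℕ × ℕ) : ℕ × ℕ :=
  if InD lam (c.1 + 1) c.2 then
    if InD lam c.1 (c.2 + 1) then
      if T c.1 (c.2 + 1) ≤ T (c.1 + 1) c.2 then (c.1 + 1, c.2) else (c.1, c.2 + 1)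
    else (c.1 + 1, c.2)
  else (c.1, c.2 + 1)

/-- Forward slide loop; returns the final filling and the vacated box. -/
def fSlideAux (lam : List ℕ) :
    ℕ → (ℕ → ℕ → ℕ) → ℕ × ℕ → (ℕ → ℕ → ℕ) × (ℕ × ℕ)
  | 0, T, c => (T, c)
  | fuel+1, T, c =>
    if InD lam (c.1 + 1) c.2 ∨ InD lam c.1 (c.2 + 1) then
      let c' := fStep lam T c
      fSlideAux lam fuel (fun r cc => if (r, cc) = c then T c'.1 c'.2 else T r cc) c'
    else ((fun r cc => if (r, cc) = c then 0 else T r cc), c)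

/-- Remove a box from row `r` of the partition `lam`. -/
def removeAtRow (r : ℕ) (lam : List ℕ) : List ℕ :=
  (lam.set (r - 1) (lam.getD (r - 1) 0 - 1)).filter (fun x => decide (x ≠ 0))

/-- Evacuation loop: repeatedly delete the entry `a` at `(1,1)`, forward-slide,
and record `n - a + 1` at the vacated removable node. -/
def evacAux (n : ℕ) : ℕ → List ℕ → (ℕ → ℕ → ℕ) → (ℕ → ℕ → ℕ) → (ℕ → ℕ → ℕ)
  | 0, _, _, U => U
  | steps+1, lam, T, U =>
    let a := T 1 1
    let res := fSlideAux lam (lam.length + lam.sum + 2)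
      (fun r c => if (r, c) = (1, 1) then 0 else T r c) (1, 1)
    evacAux n steps (removeAtRow res.2.1 lam) res.1
      (fun r c => if (r, c) = res.2 then n - a + 1 else U r c)

/-- Evacuation `e(T)` of a standard reverse tableau of shape `lam ⊢ n`. -/
def evac (n : ℕ) (lam : List ℕ) (T : ℕ → ℕ → ℕ) : ℕ → ℕ → ℕ :=
  evacAux n n lam T (fun _ _ => 0)

/-! ### Chains and Littlewood–Richardson coefficients -/

/-- Number of maximal chains from `α` to `β` in the poset `R_c`. -/
noncomputable def chainCount (α β : List ℕ) : ℕ :=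
  Nat.card {c : List (List ℕ) // c.Chain' CoverR ∧ c.head? = some α ∧ c.getLast? = some β}

/-- A skew SRCT of shape `δ // β` rectifies to the canonical tableau `τ_α`, i.e.
`ρ⁻¹(P(w_τ)) = τ_α` (expressed via matching column multisets). -/
def RectifiesToCanon (δ β α : List ℕ) (τ : ℕ → ℕ → ℕ) : Prop :=
  ∀ c v, 0 < v →
    Nat.card {r : ℕ // InD α r c ∧ canonTab α r c = v} =
      (colA (PTab (colWordF δ τ)) c).count v

/-- The noncommutative Littlewood–Richardson coefficient `C^β_{αγ}`: the number of
SRCTs of shape `β // γ` that rectify to the canonical tableau `τ_α`. -/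
noncomputable def Ccoef (α γ β : List ℕ) : ℕ :=
  Nat.card {τ : ℕ → ℕ → ℕ //
    Relation.TransGen CoverC γ β ∧ IsSRCTSkew β γ τ ∧ RectifiesToCanon β γ α τ}

end CompJdt

/-!
Induct on the word. Writing `w = a :: w'`, the tableau `T_w` is `T_{w'}` with every entry
raised by one and a box containing `1` added in column `a`; the reverse lattice condition is
what keeps the shape a partition with an addable node in column `a`, and it makes
column `c` of `T_{w'}` hold `count c w'` entries. As `1` is the least entry of its column, the
column word of `T_w` is that of `T_{w'}` shifted by one with `1` inserted after the columns left
of `a`, i.e. at position `#{x ∈ w' : x < a}`. On the other side, prepending `a` makes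
`std` start with `#{x ∈ w' : x < a} + 1` and shifts the larger values of `std w'`, which acts on
the inverse by the same insertion.
-/

namespace CompJdt

open List

section Lists

variable {α : Type*}

theorem flatten_set_cons {L : List (List α)} {j : ℕ} {l : List α} (hl : L[j]? = some l)
    (v : α) :
    (L.set j (v :: l)).flatten = L.flatten.insertIdx (L.take j).flatten.length v := by
  induction L generalizing j with
  | nil => simp at hl
  | cons l' L ih =>
    cases j with
    | zero => simp_all
    | succ j =>
      rw [set_cons_succ, flatten_cons, flatten_cons, ih (by simpa using hl), take_succ_cons,
        flatten_cons, length_append]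
      exact (modifyTailIdx_add _ _ _ _).symm

theorem insertionSort_append_singleton [LinearOrder α] {l : List α} {x : α}
    (hx : ∀ y ∈ l, x ≤ y) :
    (l ++ [x]).insertionSort (· ≤ ·) = x :: l.insertionSort (· ≤ ·) := by
  refine Perm.eq_of_pairwise' (pairwise_insertionSort _ _) ?_ ?_
  · exact pairwise_cons.mpr
      ⟨fun y hy => hx y ((mem_insertionSort _).mp hy), pairwise_insertionSort _ _⟩
  · exact (perm_insertionSort _ _).trans (perm_append_singleton x l |>.trans
      ((perm_insertionSort _ l).symm.cons x))

theorem idxOf_map_of_injective {β : Type*} [BEq α] [LawfulBEq α] [BEq β] [LawfulBEq β]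
    {f : α → β} (hf : Function.Injective f) (l : List α) (a : α) :
    (l.map f).idxOf (f a) = l.idxOf a := by
  induction l with
  | nil => rfl
  | cons b l ih =>
    rw [map_cons, idxOf_cons, idxOf_cons, ih]
    by_cases h : b = a
    · simp [h]
    · simp [beq_false_of_ne h, beq_false_of_ne (hf.ne h)]

end Lists

theorem countP_lt_succ (l : List ℕ) (k : ℕ) :
    l.countP (· < k + 1) = l.countP (· < k) + l.count k := by
  induction l with
  | nil => rfl
  | cons x l ih =>
    simp only [countP_cons, count_cons, ih, beq_iff_eq, decide_eq_true_eq]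
    split_ifs <;> omega

theorem sum_map_range_count_succ {l : List ℕ} (hl : ∀ x ∈ l, 0 < x) (K : ℕ) :
    ((range K).map fun c => l.count (c + 1)).sum = l.countP (· < K + 1) := by
  induction K with
  | zero =>
    refine (countP_eq_zero.mpr fun x hx hlt => ?_).symm
    have := hl x hx
    simp only [decide_eq_true_eq] at hlt
    omega
  | succ K ih => rw [range_succ, map_append, sum_append, ih, countP_lt_succ (k := K + 1)]; simp

def incrEntries (t : List (List ℕ)) : List (List ℕ) := t.map (map (· + 1))

section Tableaux

variable {t : List (List ℕ)} {a c v : ℕ}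

theorem colA_cons (row : List ℕ) (t : List (List ℕ)) (c : ℕ) :
    colA (row :: t) c = row[c - 1]?.toList ++ colA t c := by
  rw [colA, filterMap_cons]
  cases row[c - 1]? <;> rfl

theorem colA_eq_nil (h : ∀ row ∈ t, row.length < c) : colA t c = [] := by
  refine filterMap_eq_nil_iff.mpr fun row hrow => getElem?_eq_none ?_
  have := h row hrow
  omega

theorem colA_incrEntries (t : List (List ℕ)) (c : ℕ) :
    colA (incrEntries t) c = (colA t c).map (· + 1) := by
  simp [colA, incrEntries, filterMap_map, map_filterMap]

theorem tabShape_incrEntries (t : List (List ℕ)) : tabShape (incrEntries t) = tabShape t := by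
  simp [tabShape, incrEntries, Function.comp_def]

theorem addBoxCol_incrEntries (a v : ℕ) (t : List (List ℕ)) :
    addBoxCol a (v + 1) (incrEntries t) = incrEntries (addBoxCol a v t) := by
  induction t with
  | nil => rfl
  | cons row t ih =>
    simp only [incrEntries, map_cons, addBoxCol, length_map] at ih ⊢
    split_ifs <;> simp [ih]

theorem hasAddable_of_length_colA_lt (h : (colA t a).length < (colA t (a - 1)).length) :
    HasAddable (tabShape t) a := by
  refine .inr ?_
  induction t with
  | nil => simp [colA] at h
  | cons row t ih =>
    by_cases hrow : row.length = a - 1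
    · simp [tabShape, hrow]
    · have hsame : (row[a - 1]?.toList).length = (row[a - 1 - 1]?.toList).length := by
        rcases Nat.lt_or_ge (a - 1) row.length with hlt | hge
        · rw [getElem?_eq_getElem hlt, getElem?_eq_getElem (by omega)]; rfl
        · rw [getElem?_eq_none hge, getElem?_eq_none (by omega)]
      rw [colA_cons, colA_cons, length_append, length_append, hsame] at h
      simp only [tabShape, map_cons, mem_cons] at ih ⊢
      exact .inr (ih (by omega))

theorem HasAddable.of_cons {row : List ℕ} (h : HasAddable (tabShape (row :: t)) a)
    (ha : 1 ≤ a) (hrow : row.length + 1 ≠ a) : HasAddable (tabShape t) a := by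
  simp only [HasAddable, tabShape, map_cons, mem_cons] at h ⊢
  rcases h with h | h | h
  · exact .inl h
  · omega
  · exact .inr h

theorem isPartition_tabShape_cons {row : List ℕ} :
    IsPartition (tabShape (row :: t)) ↔
      0 < row.length ∧ (∀ r ∈ t, r.length ≤ row.length) ∧ IsPartition (tabShape t) := by
  simp only [IsPartition, tabShape, map_cons, mem_cons, forall_eq_or_imp, pairwise_cons,
    forall_mem_map, ge_iff_le]
  tauto

theorem HasAddable.eq_one_of_nil (h : HasAddable (tabShape []) a) : a = 1 := by
  simpa [HasAddable, tabShape] using h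

theorem colA_addBoxCol_self (ht : IsPartition (tabShape t)) (ha : 1 ≤ a)
    (hadd : HasAddable (tabShape t) a) : colA (addBoxCol a v t) a = colA t a ++ [v] := by
  induction t with
  | nil => simp [hadd.eq_one_of_nil, addBoxCol, colA]
  | cons row t ih =>
    obtain ⟨-, hle, ht⟩ := isPartition_tabShape_cons.mp ht
    rw [addBoxCol]
    split_ifs with h
    · have hnil : colA t a = [] := colA_eq_nil fun r hr => by have := hle r hr; omega
      subst h
      simp [colA_cons, hnil]
    · rw [colA_cons, colA_cons, ih ht (hadd.of_cons ha h), append_assoc]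

theorem colA_addBoxCol_of_ne (ha : 1 ≤ a) (hc : 1 ≤ c) (hca : c ≠ a)
    (hadd : HasAddable (tabShape t) a) : colA (addBoxCol a v t) c = colA t c := by
  induction t with
  | nil =>
    have ha1 := hadd.eq_one_of_nil
    simp [addBoxCol, colA, getElem?_eq_none (show [v].length ≤ c - 1 by simp; omega)]
  | cons row t ih =>
    rw [addBoxCol]
    split_ifs with h
    · rw [colA_cons, colA_cons, getElem?_append]
      split_ifs with hlt
      · rfl
      · rw [getElem?_eq_none (l := [v]) (by simp; omega), getElem?_eq_none (l := row) (by omega)]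
    · rw [colA_cons, colA_cons, ih (hadd.of_cons ha h)]

theorem length_le_of_mem_addBoxCol {N : ℕ} (ha : 1 ≤ a) (hN : ∀ row ∈ t, row.length ≤ N) :
    ∀ row ∈ addBoxCol a v t, row.length ≤ max a N := by
  induction t with
  | nil => simpa [addBoxCol] using .inl ha
  | cons row t ih =>
    simp only [mem_cons, forall_eq_or_imp] at hN
    rw [addBoxCol]
    split_ifs with h
    · simp only [mem_cons, forall_eq_or_imp, length_append, length_singleton]
      exact ⟨by omega, fun r hr => (hN.2 r hr).trans (le_max_right _ _)⟩
    · simp only [mem_cons, forall_eq_or_imp]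
      exact ⟨hN.1.trans (le_max_right _ _), ih hN.2⟩

theorem isPartition_addBoxCol (ht : IsPartition (tabShape t)) (ha : 1 ≤ a)
    (hadd : HasAddable (tabShape t) a) : IsPartition (tabShape (addBoxCol a v t)) := by
  induction t with
  | nil => simp [addBoxCol, IsPartition, tabShape]
  | cons row t ih =>
    obtain ⟨hpos, hle, ht⟩ := isPartition_tabShape_cons.mp ht
    rw [addBoxCol]
    split_ifs with h
    · refine isPartition_tabShape_cons.mpr ⟨by simp, fun r hr => ?_, ht⟩
      have := hle r hr
      simp only [length_append, length_singleton]
      omega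
    · have har : a ≤ row.length := by
        rcases hadd with h1 | h1
        · omega
        · simp only [tabShape, map_cons, mem_cons, mem_map] at h1
          rcases h1 with h1 | ⟨r, hr, hr'⟩
          · omega
          · have := hle r hr
            omega
      refine isPartition_tabShape_cons.mpr ⟨hpos, fun r hr => ?_, ih ht (hadd.of_cons ha h)⟩
      exact (length_le_of_mem_addBoxCol ha hle r hr).trans (max_le har le_rfl)

theorem colWordL_eq_flatten_range {N : ℕ} (hN : ∀ row ∈ t, row.length ≤ N) :
    colWordL t = ((range N).map fun c0 => (colA t (c0 + 1)).insertionSort (· ≤ ·)).flatten := by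
  have hle : ∀ row ∈ t, row.length ≤ (t.map length).foldr max 0 := fun row hrow =>
    le_max_of_le' 0 (mem_map_of_mem hrow) le_rfl
  obtain ⟨k, hk⟩ := Nat.exists_eq_add_of_le
    (max_le_of_forall_le _ _ (by simpa using hN) : (t.map length).foldr max 0 ≤ N)
  have hempty : ∀ i, colA t ((t.map length).foldr max 0 + i + 1) = [] := fun i =>
    colA_eq_nil fun row hrow => by have := hle row hrow; omega
  rw [hk, range_add, map_append, flatten_append, map_map]
  simp [Function.comp_def, hempty, colWordL]

theorem colWordL_incrEntries (t : List (List ℕ)) :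
    colWordL (incrEntries t) = (colWordL t).map (· + 1) := by
  rw [colWordL, colWordL, map_flatten, map_map,
    show (incrEntries t).map length = t.map length from tabShape_incrEntries t]
  congr 1
  refine map_congr_left fun c0 _ => ?_
  rw [Function.comp_apply, colA_incrEntries]
  exact (map_insertionSort (· ≤ ·) (· ≤ ·) (· + 1) _ fun _ _ _ _ =>
    Nat.add_le_add_iff_right.symm).symm

theorem colWordL_addBoxCol (ht : IsPartition (tabShape t)) (ha : 1 ≤ a)
    (hadd : HasAddable (tabShape t) a) (hv : ∀ x ∈ colA t a, v ≤ x) :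
    colWordL (addBoxCol a v t) = (colWordL t).insertIdx
      ((range (a - 1)).map fun c0 => (colA t (c0 + 1)).length).sum v := by
  set N := max a ((t.map length).foldr max 0)
  have hN : ∀ row ∈ t, row.length ≤ N := fun row hrow =>
    le_max_of_le_right (le_max_of_le' 0 (mem_map_of_mem hrow) le_rfl)
  have hcols :
      (range N).map (fun c0 => (colA (addBoxCol a v t) (c0 + 1)).insertionSort (· ≤ ·))
      = ((range N).map fun c0 => (colA t (c0 + 1)).insertionSort (· ≤ ·)).set (a - 1)
          (v :: (colA t a).insertionSort (· ≤ ·)) := by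
    refine ext_getElem (by simp) fun c0 _ _ => ?_
    simp only [getElem_set, getElem_map, getElem_range]
    split_ifs with hc0
    · subst hc0
      rw [Nat.sub_add_cancel ha, colA_addBoxCol_self ht ha hadd,
        insertionSort_append_singleton hv]
    · rw [colA_addBoxCol_of_ne ha (by omega) (by omega) hadd]
  rw [colWordL_eq_flatten_range fun r hr =>
      (length_le_of_mem_addBoxCol ha hN r hr).trans (max_le (le_max_left _ _) le_rfl),
    colWordL_eq_flatten_range hN, hcols, flatten_set_cons
    (by simp [getElem?_range (show a - 1 < N by omega), Nat.sub_add_cancel ha])]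
  simp [← map_take, take_range, length_flatten, Function.comp_def,
    show min (a - 1) N = a - 1 by omega]

end Tableaux

theorem ReverseLattice.of_cons {a : ℕ} {w : List ℕ} (hw : ReverseLattice (a :: w)) :
    ReverseLattice w :=
  ⟨fun x hx => hw.1 x (mem_cons_of_mem a hx), fun s hs => hw.2 s
    ((mem_tails _ _).mpr (((mem_tails _ _).mp hs).trans (suffix_cons a w)))⟩

theorem hasAddable_of_reverseLattice {t : List (List ℕ)} {a : ℕ} {w : List ℕ}
    (hcol : ∀ c, 1 ≤ c → (colA t c).length = w.count c) (hw : ReverseLattice (a :: w)) :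
    HasAddable (tabShape t) a := by
  have ha : 0 < a := hw.1 a mem_cons_self
  by_cases ha1 : a = 1
  · exact .inl ha1
  refine hasAddable_of_length_colA_lt ?_
  have hlat := hw.2 (a :: w) ((mem_tails _ _).mpr (suffix_refl _)) (a - 2)
  rw [show a - 2 + 2 = a by omega, show a - 2 + 1 = a - 1 by omega, count_cons_self,
    count_cons_of_ne (by omega)] at hlat
  rw [hcol a ha, hcol (a - 1) (by omega)]
  omega

theorem foldl_range_addBoxCol_cons (a : ℕ) (w : List ℕ) {j : ℕ} (hj : j ≤ w.length) :
    (range j).foldl (fun t k => addBoxCol ((a :: w).reverse.getD k 0) (w.length + 1 - k) t) []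
      = incrEntries
          ((range j).foldl (fun t k => addBoxCol (w.reverse.getD k 0) (w.length - k) t) []) := by
  induction j with
  | zero => rfl
  | succ j ih =>
    rw [range_succ, foldl_append, foldl_append, foldl_cons, foldl_cons, foldl_nil, foldl_nil,
      ih (by omega), reverse_cons, getD_append _ _ _ _ (by simp; omega),
      show w.length + 1 - j = w.length - j + 1 by omega, addBoxCol_incrEntries]

theorem TwTab_cons (a : ℕ) (w : List ℕ) :
    TwTab (a :: w) = addBoxCol a 1 (incrEntries (TwTab w)) := by
  rw [TwTab, TwTab, length_cons, range_succ, foldl_append, foldl_cons, foldl_nil,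
    foldl_range_addBoxCol_cons a w le_rfl, reverse_cons,
    getD_append_right _ _ _ _ (by simp)]
  simp

theorem TwTab_spec {w : List ℕ} (hw : ReverseLattice w) :
    IsPartition (tabShape (TwTab w)) ∧
      ∀ c, 1 ≤ c → (colA (TwTab w) c).length = w.count c := by
  induction w with
  | nil => exact ⟨by simp [TwTab, IsPartition, tabShape], fun c _ => rfl⟩
  | cons a w ih =>
    obtain ⟨ht, hcol⟩ := ih hw.of_cons
    have ha : 1 ≤ a := hw.1 a mem_cons_self
    have hadd := hasAddable_of_reverseLattice hcol hw
    rw [← tabShape_incrEntries] at ht hadd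
    rw [TwTab_cons]
    refine ⟨isPartition_addBoxCol ht ha hadd, fun c hc => ?_⟩
    rcases eq_or_ne c a with rfl | hca
    · rw [colA_addBoxCol_self ht ha hadd, length_append, colA_incrEntries, length_map, hcol c hc,
        count_cons_self]
      rfl
    · rw [colA_addBoxCol_of_ne ha hc hca hadd, colA_incrEntries, length_map, hcol c hc,
        count_cons_of_ne (Ne.symm hca)]

theorem length_stdList (w : List ℕ) : (stdList w).length = w.length := by
  simp [stdList]

theorem getElem_stdList (w : List ℕ) {p : ℕ} (hp : p < (stdList w).length) :
    (stdList w)[p] = w.countP (· < w.getD p 0) + (w.take (p + 1)).count (w.getD p 0) := by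
  simp [stdList, countP_eq_length_filter, count_eq_countP, _root_.beq_eq_decide]

theorem stdList_cons (a : ℕ) (w : List ℕ) :
    stdList (a :: w) = (w.countP (· < a) + 1) ::
      (stdList w).map fun s => if s ≤ w.countP (· < a) then s else s + 1 := by
  refine ext_getElem (by simp [length_stdList]) fun p h₁ h₂ => ?_
  cases p with
  | zero => simp [getElem_stdList]
  | succ p =>
    have hp : p < w.length := by simpa [length_stdList] using h₁
    have hx : 0 < (w.take (p + 1)).count (w.getD p 0) :=
      count_pos_iff.mpr (mem_take_iff_getElem.mpr ⟨p, by omega, (getD_eq_getElem _ _ hp).symm⟩)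
    have hcount := (take_sublist (p + 1) w).count_le (w.getD p 0)
    rw [getElem_stdList _ h₁, getElem_cons_succ, getElem_map, getElem_stdList]
    simp only [getD_cons_succ, take_succ_cons, countP_cons, count_cons]
    generalize w.getD p 0 = x at *
    have hsucc := countP_lt_succ w x
    rcases lt_or_ge x a with hxa | hax
    · have : w.countP (· < x + 1) ≤ w.countP (· < a) :=
        countP_mono_left fun y _ hy => by simp only [decide_eq_true_eq] at hy ⊢; omega
      have hlt : decide (a < x) = false := by simp; omega
      have heq : (a == x) = false := by simp; omega
      simp only [hlt, heq, Bool.false_eq_true, if_false, add_zero]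
      rw [if_pos (by omega)]
    · have : w.countP (· < a) ≤ w.countP (· < x) :=
        countP_mono_left fun y _ hy => by simp only [decide_eq_true_eq] at hy ⊢; omega
      rcases hax.lt_or_eq with hax | rfl
      · have hlt : decide (a < x) = true := by simpa
        have heq : (a == x) = false := by simp; omega
        simp only [hlt, heq, Bool.false_eq_true, if_true, if_false, add_zero]
        rw [if_neg (by omega)]
        omega
      · simp only [lt_irrefl, decide_false, beq_self_eq_true, Bool.false_eq_true, if_true,
          if_false, add_zero]
        rw [if_neg (by omega)]
        omega

theorem length_invList (σ : List ℕ) : (invList σ).length = σ.length := by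
  simp [invList]

theorem getElem_invList (σ : List ℕ) {k : ℕ} (hk : k < (invList σ).length) :
    (invList σ)[k] = σ.idxOf (k + 1) + 1 := by
  simp [invList]

theorem invList_cons_map {σ : List ℕ} {m : ℕ} (hm : m ≤ σ.length) :
    invList ((m + 1) :: σ.map fun s => if s ≤ m then s else s + 1)
      = ((invList σ).map (· + 1)).insertIdx m 1 := by
  set f : ℕ → ℕ := fun s => if s ≤ m then s else s + 1
  have hf : Function.Injective f := fun x y hxy => by
    simp only [f] at hxy
    split_ifs at hxy <;> omega
  refine ext_getElem (by simp [length_invList, length_insertIdx, hm]) fun k h₁ h₂ => ?_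
  rw [getElem_invList _ h₁, getElem_insertIdx, idxOf_cons]
  split_ifs with hkm hkm'
  · have hidx : (σ.map f).idxOf (k + 1) = σ.idxOf (k + 1) := by
      rw [← idxOf_map_of_injective hf σ (k + 1)]
      exact congrArg (σ.map f).idxOf (if_pos (show k + 1 ≤ m by omega)).symm
    rw [Bool.cond_neg (by simp; omega), getElem_map, getElem_invList, hidx]
  · simp [hkm']
  · have hidx : (σ.map f).idxOf (k + 1) = σ.idxOf k := by
      rw [← idxOf_map_of_injective hf σ k]
      exact congrArg (σ.map f).idxOf (if_neg (show ¬k ≤ m by omega)).symm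
    rw [Bool.cond_neg (by simp; omega), getElem_map, getElem_invList, hidx,
      Nat.sub_add_cancel (by omega)]

theorem invList_stdList_cons (a : ℕ) (w : List ℕ) :
    invList (stdList (a :: w))
      = ((invList (stdList w)).map (· + 1)).insertIdx (w.countP (· < a)) 1 := by
  rw [stdList_cons, invList_cons_map (by simpa [length_stdList] using countP_le_length)]

/-- Let `w = i_n ⋯ i_1` be a reverse lattice word (read left to right) and
`σ = std(w)`.  Then the column reading word of the standard reverse tableau
`T_w` equals `σ⁻¹` in one-line notation. -/
theorem colword_Tw_eq_inv_std (w : List ℕ) (hw : ReverseLattice w) :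
    colWordL (TwTab w) = invList (stdList w) := by
  induction w with
  | nil => rfl
  | cons a w ih =>
    have ha : 1 ≤ a := hw.1 a mem_cons_self
    obtain ⟨ht, hcol⟩ := TwTab_spec hw.of_cons
    have hadd := hasAddable_of_reverseLattice hcol hw
    rw [← tabShape_incrEntries] at ht hadd
    rw [TwTab_cons, colWordL_addBoxCol ht ha hadd (by simp [colA_incrEntries]),
      colWordL_incrEntries, ih hw.of_cons, invList_stdList_cons]
    congr 1
    simp only [colA_incrEntries, length_map, hcol _ (Nat.succ_pos _),
      sum_map_range_count_succ hw.of_cons.1, Nat.sub_add_cancel ha]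

end CompJdt
end

section
/- Let T be an SSRT of shape λ with an addable node in column i+1, and let f_{i+1}(T)=T(r,i). Define T' by T'(p,q)=T(p,q) for q≠i, T'(p,i)=T(p,i) for p<r, and T'(p,i)=T(p+1,i) for p≥r (i.e., delete the entry T(r,i) and slide all entries above it in column i down one row). Then T' is an SSRT. -/
open scoped BigOperators

/-!
Only column `i` changes. Below row `r = f_{i+1}(T)` nothing moves; from row `r` on, each entry of
column `i` drops one row. The new column `i` is a subsequence of a strictly decreasing column, and
a dropped entry `T(p+1, i)` is smaller than `T(p, i)`, hence than its new left neighbour. The only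
new comparison is with its new right neighbour `T(p, i+1)`, and the maximality of `r` says exactly
that this box exists and `T(p, i+1) ≤ T(p+1, i)` for every `p ≥ r` below the top of column `i`.
-/

namespace CompJdt

lemma antitone_getD_of_pairwise {l : List ℕ} (hl : l.Pairwise (· ≥ ·)) :
    Antitone (l.getD · 0) := by
  intro j k hjk
  simp only [List.getD_eq_getElem?_getD]
  rcases lt_or_ge k l.length with hk | hk
  · rw [List.getElem?_eq_getElem hk, List.getElem?_eq_getElem (by omega)]
    rcases hjk.eq_or_lt with rfl | hlt
    · exact le_rfl
    · exact List.pairwise_iff_getElem.mp hl j k _ hk hlt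
  · simp [List.getElem?_eq_none hk]

lemma getD_filter_ne_zero {l : List ℕ} (hl : Antitone (l.getD · 0)) (j : ℕ) :
    (l.filter (· ≠ 0)).getD j 0 = l.getD j 0 := by
  induction l generalizing j with
  | nil => simp
  | cons a t ih =>
    rcases Nat.eq_zero_or_pos a with rfl | ha
    · have hzero : ∀ k, (0 :: t).getD k 0 = 0 := fun k =>
        Nat.eq_zero_of_le_zero (hl k.zero_le)
      have hnil : t.filter (· ≠ 0) = [] := by
        refine List.filter_eq_nil_iff.mpr fun x hx => ?_
        obtain ⟨k, hk, rfl⟩ := List.getElem_of_mem hx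
        have := hzero (k + 1)
        rw [List.getD_cons_succ, List.getD_eq_getElem _ _ hk] at this
        simpa using this
      rw [hzero, List.filter_cons_of_neg (by simp), hnil, List.getD_nil]
    · rw [List.filter_cons_of_pos (by simpa using ha.ne')]
      cases j with
      | zero => rfl
      | succ j => exact ih (fun j k hjk => hl (Nat.succ_le_succ hjk)) j

lemma le_getD_iff_lt_countP {l : List ℕ} (hl : l.Pairwise (· ≥ ·)) {i : ℕ} (hi : 0 < i)
    (j : ℕ) : i ≤ l.getD j 0 ↔ j < l.countP (i ≤ ·) := by
  induction l generalizing j with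
  | nil => simp; omega
  | cons a t ih =>
    obtain ⟨ha, ht⟩ := List.pairwise_cons.mp hl
    by_cases hia : i ≤ a
    · cases j with
      | zero => simp [hia]
      | succ j => simp only [List.getD_cons_succ, List.countP_cons, hia, ih ht]; simp
    · have hsmall : ∀ x ∈ t, x < i := fun x hx => lt_of_le_of_lt (ha x hx) (not_le.mp hia)
      have hcount : t.countP (i ≤ ·) = 0 := List.countP_eq_zero.mpr fun x hx => by
        simpa using hsmall x hx
      cases j with
      | zero => simp [hia, hcount]
      | succ j =>
        have hj : t.getD j 0 < i := by
          rcases lt_or_ge j t.length with hj | hj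
          · rw [List.getD_eq_getElem _ _ hj]; exact hsmall _ (List.getElem_mem hj)
          · rwa [List.getD_eq_default _ _ hj]
        simp only [List.getD_cons_succ, List.countP_cons, hia, hcount, decide_false,
          Bool.false_eq_true, if_false]
        omega

lemma le_length_of_inD {l : List ℕ} {r c : ℕ} (h : InD l r c) : r ≤ l.length := by
  by_contra hr
  have := h.2.2
  rw [List.getD_eq_default _ _ (by omega)] at this
  omega

lemma inD_iff_le_countP {l : List ℕ} (hl : l.Pairwise (· ≥ ·)) {c : ℕ} (hc : 0 < c)
    (r : ℕ) : InD l r c ↔ 1 ≤ r ∧ r ≤ l.countP (c ≤ ·) := by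
  have := le_getD_iff_lt_countP hl hc (r - 1)
  constructor
  · rintro ⟨hr, -, hle⟩; omega
  · rintro ⟨hr, hle⟩; exact ⟨hr, hc, this.mpr (by omega)⟩

lemma isSSRT_iff {lam : List ℕ} {T : ℕ → ℕ → ℕ} :
    IsSSRT lam T ↔ (∀ r c, ¬ InD lam r c → T r c = 0) ∧ (∀ r c, InD lam r c → 0 < T r c) ∧
      (∀ r c, 1 ≤ c → InD lam r c → InD lam r (c + 1) → T r (c + 1) ≤ T r c) ∧
      (∀ r c, 1 ≤ r → InD lam r c → InD lam (r + 1) c → T (r + 1) c < T r c) := by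
  have hskew : ∀ r c, InSkewP lam [] r c ↔ InD lam r c := fun r c =>
    ⟨And.left, fun h => ⟨h, fun ⟨_, hc, hle⟩ => by simp at hle; omega⟩⟩
  simp only [IsSSRT, IsSSRTSkew, hskew]

section TopOfColumn

variable {lam : List ℕ} {i : ℕ}

lemma getD_countP_sub_one (hl : lam.Pairwise (· ≥ ·)) (hi : 0 < i) (hmem : i ∈ lam) :
    lam.getD (lam.countP (i ≤ ·) - 1) 0 = i := by
  have hcount := le_getD_iff_lt_countP hl hi
  obtain ⟨j, hj, rfl⟩ := List.getElem_of_mem hmem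
  have hjm := (hcount j).mp (by rw [List.getD_eq_getElem _ _ hj])
  have hle : lam.getD _ 0 ≤ lam.getD j 0 :=
    antitone_getD_of_pairwise hl (show j ≤ lam.countP (lam[j] ≤ ·) - 1 by omega)
  have hge := (hcount (lam.countP (lam[j] ≤ ·) - 1)).mpr (by omega)
  rw [List.getD_eq_getElem _ _ hj] at hle
  omega

lemma getD_tjdtShape (hl : lam.Pairwise (· ≥ ·)) (hi : 0 < i) (hmem : i ∈ lam) (k : ℕ) :
    (tjdtShape lam i).getD k 0 =
      if k = lam.countP (i ≤ ·) - 1 then i - 1 else lam.getD k 0 := by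
  set m := lam.countP (i ≤ ·)
  have hcount := le_getD_iff_lt_countP hl hi
  have hanti := antitone_getD_of_pairwise hl
  have htop := getD_countP_sub_one hl hi hmem
  have hml : m - 1 < lam.length := by
    by_contra h
    rw [List.getD_eq_default _ _ (by omega)] at htop
    omega
  have hset : ∀ k, (lam.set (m - 1) (lam.getD (m - 1) 0 - 1)).getD k 0 =
      if k = m - 1 then i - 1 else lam.getD k 0 := fun k => by
    rw [htop, List.getD_eq_getElem?_getD, List.getD_eq_getElem?_getD, List.getElem?_set]
    by_cases hk : k = m - 1
    · simp [hk, hml]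
    · simp [hk, Ne.symm hk]
  have hset_anti : Antitone ((lam.set (m - 1) (lam.getD (m - 1) 0 - 1)).getD · 0) := by
    intro j k hjk
    have := hanti hjk
    have := hcount j
    have := hcount k
    simp only [hset]
    split_ifs <;> omega
  simp only [tjdtShape]
  rw [getD_filter_ne_zero hset_anti, hset]

lemma inD_tjdtShape_iff (hl : lam.Pairwise (· ≥ ·)) (hi : 0 < i) (hmem : i ∈ lam)
    (r c : ℕ) : InD (tjdtShape lam i) r c ↔ InD lam r c ∧ ¬(r = lam.countP (i ≤ ·) ∧ c = i) := by
  have htop := getD_countP_sub_one hl hi hmem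
  have hm : 1 ≤ lam.countP (i ≤ ·) := List.countP_pos_iff.mpr ⟨i, hmem, by simp⟩
  simp only [InD, getD_tjdtShape hl hi hmem]
  split_ifs with hr
  · rw [hr, htop]
    omega
  · omega

end TopOfColumn

section FRow

variable {lam : List ℕ} {T : ℕ → ℕ → ℕ} {i : ℕ}

lemma le_fRow {r : ℕ} (hr : InD lam r i)
    (hf : ¬ InD lam (r - 1) (i + 1) ∨ T r i < T (r - 1) (i + 1)) : r ≤ fRow lam T i :=
  List.le_max_of_le' 0 (List.mem_filter.mpr
    ⟨List.mem_range.mpr (Nat.lt_succ_of_le (le_length_of_inD hr)), decide_eq_true ⟨hr, hf⟩⟩)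
    le_rfl

lemma inD_fRow (h : InD lam 1 i) : InD lam (fRow lam T i) i := by
  have hone : 1 ∈ (List.range (lam.length + 1)).filter (fun r =>
      decide (InD lam r i ∧ (¬ InD lam (r - 1) (i + 1) ∨ T r i < T (r - 1) (i + 1)))) :=
    List.mem_filter.mpr ⟨List.mem_range.mpr (by have := le_length_of_inD h; omega),
      decide_eq_true ⟨h, Or.inl fun h0 => Nat.not_succ_le_zero 0 h0.1⟩⟩
  have hmax := List.maximum_mem (List.foldr_max_of_ne_nil (List.ne_nil_of_mem hone)).symm
  exact (of_decide_eq_true (List.mem_filter.mp hmax).2).1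

lemma fRow_slide {r : ℕ} (hr : fRow lam T i ≤ r) (hin : InD lam (r + 1) i) :
    InD lam r (i + 1) ∧ T r (i + 1) ≤ T (r + 1) i := by
  by_contra h
  have := le_fRow (T := T) hin <| by
    rw [Nat.add_sub_cancel]
    exact (not_and_or.mp h).imp id not_le.mp
  omega

end FRow

def eraseInColumn (T : ℕ → ℕ → ℕ) (i r₀ : ℕ) : ℕ → ℕ → ℕ :=
  fun p q => if q = i ∧ r₀ ≤ p then T (p + 1) q else T p q

section EraseInColumn

variable {lam μ : List ℕ} {T : ℕ → ℕ → ℕ} {i m r₀ : ℕ}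

lemma inD_iff_inD_succ (hcol : ∀ r, InD lam r i ↔ 1 ≤ r ∧ r ≤ m)
    (hμ : ∀ r c, InD μ r c ↔ InD lam r c ∧ ¬(r = m ∧ c = i)) (p : ℕ) :
    InD μ p i ↔ 1 ≤ p ∧ InD lam (p + 1) i := by
  rw [hμ, hcol, hcol]
  omega

lemma eraseInColumn_eq_zero (hT : IsSSRT lam T) (hcol : ∀ r, InD lam r i ↔ 1 ≤ r ∧ r ≤ m)
    (hμ : ∀ r c, InD μ r c ↔ InD lam r c ∧ ¬(r = m ∧ c = i)) (hr₀ : 1 ≤ r₀) (hr₀m : r₀ ≤ m)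
    {p q : ℕ} (h : ¬ InD μ p q) : eraseInColumn T i r₀ p q = 0 := by
  have hT0 := (isSSRT_iff.mp hT).1
  simp only [eraseInColumn]
  split_ifs with hq
  · obtain ⟨rfl, hp⟩ := hq
    exact hT0 _ _ fun hin => h ((inD_iff_inD_succ hcol hμ p).mpr ⟨by omega, hin⟩)
  · refine hT0 _ _ fun hin => h ((hμ p q).mpr ⟨hin, ?_⟩)
    rintro ⟨rfl, rfl⟩
    exact hq ⟨rfl, hr₀m⟩

lemma eraseInColumn_pos (hT : IsSSRT lam T) (hcol : ∀ r, InD lam r i ↔ 1 ≤ r ∧ r ≤ m)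
    (hμ : ∀ r c, InD μ r c ↔ InD lam r c ∧ ¬(r = m ∧ c = i))
    {p q : ℕ} (h : InD μ p q) : 0 < eraseInColumn T i r₀ p q := by
  have hTpos := (isSSRT_iff.mp hT).2.1
  simp only [eraseInColumn]
  split_ifs with hq
  · obtain ⟨rfl, -⟩ := hq
    exact hTpos _ _ ((inD_iff_inD_succ hcol hμ p).mp h).2
  · exact hTpos _ _ ((hμ p q).mp h).1

lemma eraseInColumn_row (hT : IsSSRT lam T) (hcol : ∀ r, InD lam r i ↔ 1 ≤ r ∧ r ≤ m)
    (hμ : ∀ r c, InD μ r c ↔ InD lam r c ∧ ¬(r = m ∧ c = i))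
    (hslide : ∀ r, r₀ ≤ r → InD lam (r + 1) i →
      InD lam r (i + 1) ∧ T r (i + 1) ≤ T (r + 1) i)
    {p c : ℕ} (hc : 1 ≤ c) (h : InD μ p c) (h' : InD μ p (c + 1)) :
    eraseInColumn T i r₀ p (c + 1) ≤ eraseInColumn T i r₀ p c := by
  obtain ⟨-, -, hTrow, hTcol⟩ := isSSRT_iff.mp hT
  simp only [eraseInColumn]
  split_ifs with hleft hright hright
  · omega
  · obtain ⟨rfl, -⟩ := hleft
    have hbelow := ((inD_iff_inD_succ hcol hμ p).mp h').2
    have hp := ((hμ p c).mp h).1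
    exact (hTcol p (c + 1) hp.1 ((hμ p (c + 1)).mp h').1 hbelow).le.trans
      (hTrow p c hc hp ((hμ p (c + 1)).mp h').1)
  · obtain ⟨rfl, hp⟩ := hright
    exact (hslide p hp ((inD_iff_inD_succ hcol hμ p).mp h).2).2
  · exact hTrow p c hc ((hμ p c).mp h).1 ((hμ p (c + 1)).mp h').1

lemma eraseInColumn_col (hT : IsSSRT lam T) (hcol : ∀ r, InD lam r i ↔ 1 ≤ r ∧ r ≤ m)
    (hμ : ∀ r c, InD μ r c ↔ InD lam r c ∧ ¬(r = m ∧ c = i))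
    {p c : ℕ} (hp : 1 ≤ p) (h : InD μ p c) (h' : InD μ (p + 1) c) :
    eraseInColumn T i r₀ (p + 1) c < eraseInColumn T i r₀ p c := by
  obtain ⟨-, -, -, hTcol⟩ := isSSRT_iff.mp hT
  have hlam := ((hμ p c).mp h).1
  have hlam' := ((hμ (p + 1) c).mp h').1
  simp only [eraseInColumn]
  split_ifs with hupper hlower hlower
  · obtain ⟨rfl, -⟩ := hupper
    exact hTcol (p + 1) c (by omega) hlam' ((inD_iff_inD_succ hcol hμ (p + 1)).mp h').2
  · obtain ⟨rfl, -⟩ := hupper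
    have hnext := ((inD_iff_inD_succ hcol hμ (p + 1)).mp h').2
    exact (hTcol (p + 1) c (by omega) hlam' hnext).trans (hTcol p c hp hlam hlam')
  · omega
  · exact hTcol p c hp hlam hlam'

theorem isSSRT_eraseInColumn (hT : IsSSRT lam T) (hcol : ∀ r, InD lam r i ↔ 1 ≤ r ∧ r ≤ m)
    (hμ : ∀ r c, InD μ r c ↔ InD lam r c ∧ ¬(r = m ∧ c = i)) (hr₀ : 1 ≤ r₀) (hr₀m : r₀ ≤ m)
    (hslide : ∀ r, r₀ ≤ r → InD lam (r + 1) i →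
      InD lam r (i + 1) ∧ T r (i + 1) ≤ T (r + 1) i) :
    IsSSRT μ (eraseInColumn T i r₀) :=
  isSSRT_iff.mpr ⟨fun _ _ => eraseInColumn_eq_zero hT hcol hμ hr₀ hr₀m,
    fun _ _ => eraseInColumn_pos hT hcol hμ,
    fun _ _ hc => eraseInColumn_row hT hcol hμ hslide hc,
    fun _ _ hp => eraseInColumn_col hT hcol hμ hp⟩

end EraseInColumn

/-- Let `T` be an SSRT of shape `lam` with an addable node in column `i+1`, and
let `f_{i+1}(T) = T(r, i)`.  The filling `T'` obtained by deleting that entry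
and sliding all entries of column `i` above it down one row is again an SSRT
(of the shape obtained from `lam` by removing the topmost box of column `i`). -/
theorem tjdt_is_ssrt (lam : List ℕ) (hlam : IsPartition lam)
    (T : ℕ → ℕ → ℕ) (hT : IsSSRT lam T)
    (i : ℕ) (hi : 0 < i) (hadd : HasAddable lam (i + 1)) :
    IsSSRT (tjdtShape lam i) (tjdtFun lam T i) := by
  have hsort := hlam.2
  have hmem : i ∈ lam := by
    rcases hadd with h | h
    · omega
    · simpa using h
  have hcol := inD_iff_le_countP hsort hi
  have hfRow := inD_fRow (T := T) <|
    (hcol 1).mpr ⟨le_rfl, List.countP_pos_iff.mpr ⟨i, hmem, by simp⟩⟩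
  show IsSSRT _ (eraseInColumn T i (fRow lam T i))
  exact isSSRT_eraseInColumn hT hcol (inD_tjdtShape_iff hsort hi hmem) ((hcol _).mp hfRow).1
    ((hcol _).mp hfRow).2 fun _ => fRow_slide

end CompJdt
end
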